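/- arXiv:2602.14938 — 2 statements merged into one kernel-verified Lean document; each statement's English description precedes it below -/
import Mathlib

section
/- Let L_r and L_f be differentiable functions on ℝ^d with L_r μ-strongly convex, and let θ* satisfy (1-r_f)∇L_r(θ*) + r_f·∇L_f(θ*) = 0 for r_f ∈ (0,1). Then the unique minimizer θ*_r of L_r satisfies ‖θ* - θ*_r‖ ≤ (r_f/(1-r_f))·‖∇L_f(θ*)‖/μ. -/
/-!
The first-order strong convexity inequality, added for the pairs `(x, y)` and `(y, x)`, makes
the gradient of `L_r` strongly monotone; by Cauchy–Schwarz this gives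
`μ ‖θ - θ*_r‖ ≤ ‖∇L_r θ‖`, since `∇L_r θ*_r = 0`. At the stationary point `θ*` of the mixed
loss, `∇L_r θ* = -(r_f / (1 - r_f)) ∇L_f θ*`.
-/

open RealInnerProductSpace

section StrongConvexity

variable {E : Type*} [NormedAddCommGroup E] [InnerProductSpace ℝ E]
  {f : E → ℝ} {g : E → E} {μ : ℝ}

theorem mul_sq_norm_sub_le_inner_of_strongConvex
    (hsc : ∀ x y, f y ≥ f x + ⟪g x, y - x⟫ + μ / 2 * ‖y - x‖ ^ 2) (x y : E) :
    μ * ‖x - y‖ ^ 2 ≤ ⟪g x - g y, x - y⟫ := by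
  have hxy := hsc x y
  have hyx := hsc y x
  rw [← neg_sub x y, inner_neg_right, norm_neg] at hxy
  rw [inner_sub_left]
  linarith

theorem mul_norm_sub_le_norm_sub_of_strongConvex
    (hsc : ∀ x y, f y ≥ f x + ⟪g x, y - x⟫ + μ / 2 * ‖y - x‖ ^ 2) (x y : E) :
    μ * ‖x - y‖ ≤ ‖g x - g y‖ := by
  rcases (norm_nonneg (x - y)).eq_or_lt with hzero | hpos
  · rw [← hzero, mul_zero]
    exact norm_nonneg _
  refine le_of_mul_le_mul_right ?_ hpos
  calc μ * ‖x - y‖ * ‖x - y‖ = μ * ‖x - y‖ ^ 2 := by ring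
    _ ≤ ⟪g x - g y, x - y⟫ := mul_sq_norm_sub_le_inner_of_strongConvex hsc x y
    _ ≤ ‖g x - g y‖ * ‖x - y‖ := real_inner_le_norm _ _

end StrongConvexity

theorem norm_eq_div_mul_norm_of_smul_add_smul_eq_zero {E : Type*} [NormedAddCommGroup E]
    [NormedSpace ℝ E] {r : ℝ} (hr₀ : 0 ≤ r) (hr₁ : r < 1) {a b : E}
    (h : (1 - r) • a + r • b = 0) : ‖a‖ = r / (1 - r) * ‖b‖ := by
  have hnorm := congrArg norm (eq_neg_of_add_eq_zero_left h)
  rw [norm_neg, norm_smul, norm_smul, Real.norm_of_nonneg (by linarith),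
    Real.norm_of_nonneg hr₀] at hnorm
  rw [div_mul_eq_mul_div, eq_div_iff (by linarith)]
  linarith

theorem stmt3_general {d : ℕ} (Lr : EuclideanSpace ℝ (Fin d) → ℝ)
    (gr gf : EuclideanSpace ℝ (Fin d) → EuclideanSpace ℝ (Fin d))
    (μ rf : ℝ) (hμ : 0 < μ) (hrf : rf ∈ Set.Ioo (0 : ℝ) 1)
    (hsc : ∀ x y, Lr y ≥ Lr x + ⟪gr x, y - x⟫ + μ / 2 * ‖y - x‖ ^ 2)
    (θs θsr : EuclideanSpace ℝ (Fin d))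
    (hstat : (1 - rf) • gr θs + rf • gf θs = 0)
    (hminr : gr θsr = 0) :
    ‖θs - θsr‖ ≤ rf / (1 - rf) * (‖gf θs‖ / μ) := by
  have hdist := mul_norm_sub_le_norm_sub_of_strongConvex hsc θs θsr
  rw [hminr, sub_zero, norm_eq_div_mul_norm_of_smul_add_smul_eq_zero hrf.1.le hrf.2 hstat] at hdist
  rw [← mul_div_assoc, le_div_iff₀ hμ, mul_comm]
  exact hdist

/-- data-dependent optima-distance bound using the forget-set
gradient norm at θ*. -/
theorem stmt3 {d : ℕ} (Lr Lf : EuclideanSpace ℝ (Fin d) → ℝ)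
    (gr gf : EuclideanSpace ℝ (Fin d) → EuclideanSpace ℝ (Fin d))
    (μ rf : ℝ) (hμ : 0 < μ) (hrf : rf ∈ Set.Ioo (0 : ℝ) 1)
    (hdr : ∀ x, HasGradientAt Lr (gr x) x)
    (hdf : ∀ x, HasGradientAt Lf (gf x) x)
    (hsc : ∀ x y, Lr y ≥ Lr x + ⟪gr x, y - x⟫ + μ / 2 * ‖y - x‖ ^ 2)
    (θs θsr : EuclideanSpace ℝ (Fin d))
    (hstat : (1 - rf) • gr θs + rf • gf θs = 0)
    (hminr : gr θsr = 0) (hmin : ∀ θ, Lr θsr ≤ Lr θ) :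
    ‖θs - θsr‖ ≤ rf / (1 - rf) * (‖gf θs‖ / μ) :=
  stmt3_general Lr gr gf μ rf hμ hrf hsc θs θsr hstat hminr
end

section
/- Let a recursion d_{t+1} ≤ (1 - 2/t)·d_t + G²/(μ²·t²) hold for t ≥ 2, with d_t ≥ 0. Then for all T ≥ 2, d_T ≤ max(d_2·4/T², 0) + G²/(μ²·T)·C for an absolute constant C, in particular d_T = O(G²/(μ²·T)). -/
/-!
Induction on `T` with the hypothesis `d T ≤ 4 d₂ / T² + g / T`, where `g = G² / μ²`. The two
terms propagate separately: the contraction factor `1 - 2/t` shrinks `4 d₂ / t²` below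
`4 d₂ / (t+1)²` because `(t - 2)(t + 1)² ≤ t³`, and it absorbs the new noise `g / t²` into
`g / (t+1)` because `(t - 1)(t + 1) ≤ t²`.
-/

lemma one_sub_two_div_div_sq_le {x : ℝ} (hx : 0 < x) :
    (1 - 2 / x) / x ^ 2 ≤ 1 / (x + 1) ^ 2 := by
  rw [div_le_div_iff₀ (by positivity) (by positivity)]
  field_simp
  nlinarith

lemma one_sub_two_div_div_add_one_div_sq_le {x : ℝ} (hx : 0 < x) :
    (1 - 2 / x) / x + 1 / x ^ 2 ≤ 1 / (x + 1) := by
  rw [show (1 - 2 / x) / x + 1 / x ^ 2 = (x - 1) / x ^ 2 by field_simp; ring,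
    div_le_div_iff₀ (by positivity) (by positivity)]
  nlinarith

lemma sgd_bound_step {x A g d : ℝ} (hx : 2 ≤ x) (hA : 0 ≤ A) (hg : 0 ≤ g)
    (hd : d ≤ A * 4 / x ^ 2 + g / x) :
    (1 - 2 / x) * d + g / x ^ 2 ≤ A * 4 / (x + 1) ^ 2 + g / (x + 1) := by
  have hx0 : 0 < x := by linarith
  have hfac : 0 ≤ 1 - 2 / x := by rw [sub_nonneg, div_le_one hx0]; linarith
  have hA' :=
    mul_le_mul_of_nonneg_left (one_sub_two_div_div_sq_le hx0) (by positivity : 0 ≤ A * 4)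
  have hg' := mul_le_mul_of_nonneg_left (one_sub_two_div_div_add_one_div_sq_le hx0) hg
  calc (1 - 2 / x) * d + g / x ^ 2
      ≤ (1 - 2 / x) * (A * 4 / x ^ 2 + g / x) + g / x ^ 2 := by gcongr
    _ = A * 4 * ((1 - 2 / x) / x ^ 2) + g * ((1 - 2 / x) / x + 1 / x ^ 2) := by ring
    _ ≤ A * 4 * (1 / (x + 1) ^ 2) + g * (1 / (x + 1)) := add_le_add hA' hg'
    _ = A * 4 / (x + 1) ^ 2 + g / (x + 1) := by ring

theorem le_of_sgd_recursion {d : ℕ → ℝ} {g : ℝ} (hg : 0 ≤ g) (hd₂ : 0 ≤ d 2)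
    (hrec : ∀ t : ℕ, 2 ≤ t → d (t + 1) ≤ (1 - 2 / (t : ℝ)) * d t + g / (t : ℝ) ^ 2) :
    ∀ T : ℕ, 2 ≤ T → d T ≤ d 2 * 4 / (T : ℝ) ^ 2 + g / T := by
  intro T hT
  induction T, hT using Nat.le_induction with
  | base => norm_num; positivity
  | succ t ht ih =>
    push_cast
    exact (hrec t ht).trans (sgd_bound_step (by exact_mod_cast ht) hd₂ hg ih)

/-- the deterministic SGD recursion d_{t+1} ≤ (1-2/t)d_t + G²/(μ²t²)
implies d_T ≤ 4·d_2/T² + C·G²/(μ²T) for an absolute constant C. -/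
theorem stmt19 :
    ∃ C > (0 : ℝ), ∀ (d : ℕ → ℝ) (G μ : ℝ), 0 < μ →
      (∀ t, 0 ≤ d t) →
      (∀ t : ℕ, 2 ≤ t →
        d (t + 1) ≤ (1 - 2 / (t : ℝ)) * d t + G ^ 2 / (μ ^ 2 * (t : ℝ) ^ 2)) →
      ∀ T : ℕ, 2 ≤ T →
        d T ≤ max (d 2 * 4 / (T : ℝ) ^ 2) 0 + C * G ^ 2 / (μ ^ 2 * T) := by
  refine ⟨1, one_pos, fun d G μ _ hd hrec T hT => ?_⟩
  have hrec' : ∀ t : ℕ, 2 ≤ t →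
      d (t + 1) ≤ (1 - 2 / (t : ℝ)) * d t + G ^ 2 / μ ^ 2 / (t : ℝ) ^ 2 := by
    simpa only [div_div] using hrec
  calc d T ≤ d 2 * 4 / (T : ℝ) ^ 2 + G ^ 2 / μ ^ 2 / T :=
        le_of_sgd_recursion (by positivity) (hd 2) hrec' T hT
    _ ≤ max (d 2 * 4 / (T : ℝ) ^ 2) 0 + 1 * G ^ 2 / (μ ^ 2 * T) := by
        rw [one_mul, div_div]
        gcongr
        exact le_max_left _ _
end
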